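/- arXiv:1911.09944 — 7 statements merged into one kernel-verified Lean document; each statement's English description precedes it below -/
import Mathlib

section
/- For all integers q ≥ 2 and n, R with 0 < R < n, every R-deletion-covering code C ⊆ Σ_q^n satisfies |C| ≥ q · Σ_{r=1}^{n−R} (q−1)^{r−1} · C(n−R−1, r−1) / C(r+3R−1, R); equivalently, K_D^q(n,R) ≥ q · Σ_{r=1}^{n−R} (q−1)^{r−1} C(n−R−1, r−1) / C(r+3R−1, R). -/
/-!
Weight each word `y` of length `m = n - R` by `1 / C(switches y + 3R, R)`, where `switches y` is
its number of runs minus one. Deleting `R` symbols destroys at most `2R` switches, and by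
Levenshtein's bound a word `c` has at most `C(R + switches c, R)` distinct `R`-deletion results,
so the words covered by a single codeword carry total weight at most `1`. Hence `|C|` is at least
the total weight of all words of length `m`, which is the left-hand side because exactly
`q (q - 1)^r C(m - 1, r)` of them have `r` switches.
-/

open Finset
open List (replicate)
open scoped List

namespace DeletionCovering

theorem sum_le_sum_sum_of_forall_exists_mem {ι β M : Type*} [DecidableEq β] [AddCommMonoid M]
    [PartialOrder M] [IsOrderedAddMonoid M] {s : Finset ι} {t : ι → Finset β} {u : Finset β}
    {f : β → M} (hf : ∀ y, 0 ≤ f y) (hu : ∀ y ∈ u, ∃ i ∈ s, y ∈ t i) :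
    ∑ y ∈ u, f y ≤ ∑ i ∈ s, ∑ y ∈ t i, f y :=
  calc ∑ y ∈ u, f y ≤ ∑ y ∈ (s.sigma t).image Sigma.snd, f y :=
        sum_le_sum_of_subset_of_nonneg (fun y hy => by
          obtain ⟨i, hi, hy⟩ := hu y hy
          exact mem_image.mpr ⟨⟨i, y⟩, mem_sigma.mpr ⟨hi, hy⟩, rfl⟩) fun y _ _ => hf y
    _ ≤ ∑ x ∈ s.sigma t, f x.2 := sum_image_le_of_nonneg fun y _ => hf y
    _ = ∑ i ∈ s, ∑ y ∈ t i, f y := sum_sigma s t _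

theorem sum_range_choose_succ_mul {R : Type*} [CommSemiring R] (x : R) (w : ℕ → R) (k : ℕ) :
    ∑ r ∈ range (k + 2), x ^ r * (k + 1).choose r * w r =
      ∑ r ∈ range (k + 1), x ^ r * k.choose r * w r +
        x * ∑ r ∈ range (k + 1), x ^ r * k.choose r * w (r + 1) := by
  have htop : ∑ r ∈ range (k + 2), x ^ r * k.choose r * w r =
      ∑ r ∈ range (k + 1), x ^ r * k.choose r * w r := by
    simp [sum_range_succ _ (k + 1)]
  rw [← htop, sum_range_succ' _ (k + 1),
    sum_range_succ' (fun r => x ^ r * k.choose r * w r) (k + 1), mul_sum]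
  simp only [Nat.choose_succ_succ', Nat.cast_add, pow_succ, Nat.choose_zero_right, mul_add,
    add_mul, sum_add_distrib]
  ring_nf

section Switches

variable {α : Type*} [DecidableEq α]

def switches : List α → ℕ
  | a :: b :: l => (if a = b then 0 else 1) + switches (b :: l)
  | _ => 0

lemma switches_cons_cons (a b : α) (l : List α) :
    switches (a :: b :: l) = (if a = b then 0 else 1) + switches (b :: l) := rfl

lemma switches_cons_le (a : α) (l : List α) : switches (a :: l) ≤ switches l + 1 := by
  cases l with
  | nil => simp [switches]
  | cons b l => rw [switches_cons_cons]; split <;> omega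

lemma switches_cons_le_switches_cons (a b : α) (l : List α) :
    switches (b :: l) ≤ switches (a :: l) + 1 := by
  cases l with
  | nil => simp [switches]
  | cons c l => simp only [switches_cons_cons]; split <;> split <;> omega

-- The common head `a` is what makes the `cons_cons` case of the induction go through.
lemma switches_cons_le_of_sublist {y c : List α} (h : y <+ c) (a : α) :
    switches (a :: c) ≤ switches (a :: y) + 2 * (c.length - y.length) := by
  induction h generalizing a with
  | slnil => simp
  | @cons y c b h ih =>
    have := h.length_le
    have := ih b
    have := switches_cons_le_switches_cons a b y
    rw [switches_cons_cons, List.length_cons]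
    split <;> omega
  | @cons_cons y c b h ih =>
    have := h.length_le
    have := ih b
    simp only [switches_cons_cons, List.length_cons]
    omega

theorem switches_le_of_sublist {y c : List α} (h : y <+ c) :
    switches c ≤ switches y + 2 * (c.length - y.length) := by
  induction h with
  | slnil => simp
  | @cons y c b h ih =>
    have := h.length_le
    have := switches_cons_le b c
    rw [List.length_cons]
    omega
  | @cons_cons y c b h _ =>
    have := h.length_le
    have := switches_cons_le_of_sublist h b
    simp only [List.length_cons]
    omega

lemma exists_eq_replicate_append (a : α) (l : List α) :
    ∃ J c, a :: l = replicate (J + 1) a ++ c ∧ c.head? ≠ some a := by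
  induction l with
  | nil => exact ⟨0, [], rfl, by simp⟩
  | cons b l ih =>
    by_cases hb : b = a
    · obtain ⟨J, c, h, hc⟩ := ih
      exact ⟨J + 1, c, by rw [hb, h]; rfl, hc⟩
    · exact ⟨0, b :: l, rfl, by simpa using hb⟩

lemma switches_replicate_append {a : α} {c : List α} (hc : c.head? ≠ some a) (J : ℕ) :
    switches (replicate (J + 1) a ++ c) = switches c + if c = [] then 0 else 1 := by
  induction J with
  | zero =>
    cases c with
    | nil => rfl
    | cons b l =>
      have hab : a ≠ b := fun h => hc (by simp [h])
      simp [switches_cons_cons, hab, Nat.add_comm]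
  | succ J ih =>
    rw [← ih]
    show switches (a :: a :: (replicate J a ++ c)) = switches (a :: (replicate J a ++ c))
    simp [switches_cons_cons]

def deletionBall (c : List α) (k : ℕ) : Finset (List α) :=
  {y ∈ c.sublists.toFinset | y.length + k = c.length}

lemma mem_deletionBall {c y : List α} {k : ℕ} :
    y ∈ deletionBall c k ↔ y <+ c ∧ y.length + k = c.length := by
  simp [deletionBall]

lemma card_deletionBall_replicate_le_one (n : ℕ) (a : α) (k : ℕ) :
    #(deletionBall (replicate n a) k) ≤ 1 := by
  refine card_le_one.mpr fun y hy z hz => ?_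
  obtain ⟨hy, hyl⟩ := mem_deletionBall.mp hy
  obtain ⟨hz, hzl⟩ := mem_deletionBall.mp hz
  obtain ⟨i, -, rfl⟩ := List.sublist_replicate_iff.mp hy
  obtain ⟨j, -, rfl⟩ := List.sublist_replicate_iff.mp hz
  simp only [List.length_replicate] at hyl hzl
  rw [show i = j by omega]

-- `j` of the `k` deleted symbols come from the block `replicate J a`, the others from `c`.
lemma deletionBall_replicate_append_subset (J : ℕ) (a : α) (c : List α) (k : ℕ) :
    deletionBall (replicate J a ++ c) k ⊆ (range (k + 1)).biUnion fun j =>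
      (deletionBall c (k - j)).image (replicate (J - j) a ++ ·) := by
  intro y hy
  obtain ⟨hsub, hlen⟩ := mem_deletionBall.mp hy
  obtain ⟨y₁, y₂, rfl, h₁, h₂⟩ := List.sublist_append_iff.mp hsub
  obtain ⟨t, ht, rfl⟩ := List.sublist_replicate_iff.mp h₁
  have := h₂.length_le
  simp only [List.length_append, List.length_replicate] at hlen
  simp only [mem_biUnion, mem_range, mem_image, mem_deletionBall]
  exact ⟨J - t, by omega, y₂, ⟨h₂, by omega⟩, by rw [Nat.sub_sub_self ht]⟩

/-- Levenshtein's bound on the number of words obtained from `c` by `k` deletions. -/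
theorem card_deletionBall_le (c : List α) (k : ℕ) :
    #(deletionBall c k) ≤ (k + switches c).choose (switches c) := by
  induction h : c.length using Nat.strong_induction_on generalizing c k with
  | _ n ih =>
  rcases c with _ | ⟨a, l⟩
  · exact (card_filter_le _ _).trans (by simp [switches])
  obtain ⟨J, c, hc, hhead⟩ := exists_eq_replicate_append a l
  rw [hc, switches_replicate_append hhead]
  rcases eq_or_ne c [] with rfl | hne
  · simpa [switches] using card_deletionBall_replicate_le_one (J + 1) a k
  have hlt : c.length < n := by rw [← h, hc]; simp
  rw [if_neg hne]
  calc #(deletionBall (replicate (J + 1) a ++ c) k)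
      ≤ ∑ j ∈ range (k + 1), #(deletionBall c (k - j)) :=
        (card_le_card (deletionBall_replicate_append_subset _ a c k)).trans
          (card_biUnion_le.trans (sum_le_sum fun _ _ => card_image_le))
    _ ≤ ∑ j ∈ range (k + 1), (k - j + switches c).choose (switches c) :=
        sum_le_sum fun j _ => ih _ hlt c (k - j) rfl
    _ = ∑ i ∈ range (k + 1), (i + switches c).choose (switches c) :=
        sum_range_reflect (fun i => (i + switches c).choose (switches c)) (k + 1)
    _ = (k + (switches c + 1)).choose (switches c + 1) := by
        rw [Nat.sum_range_add_choose, add_assoc]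

theorem sum_deletionBall_inv_choose_le_one (c : List α) (R : ℕ) :
    ∑ y ∈ deletionBall c R, (((switches y + 3 * R).choose R : ℕ) : ℝ)⁻¹ ≤ 1 := by
  set N := (R + switches c).choose R
  have hterm : ∀ y ∈ deletionBall c R,
      (((switches y + 3 * R).choose R : ℕ) : ℝ)⁻¹ ≤ (N : ℝ)⁻¹ := by
    intro y hy
    obtain ⟨hsub, hlen⟩ := mem_deletionBall.mp hy
    have := switches_le_of_sublist hsub
    have hN : 0 < N := Nat.choose_pos (by omega)
    gcongr
    exact Nat.choose_le_choose R (by omega)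
  have hcard : #(deletionBall c R) ≤ N :=
    (card_deletionBall_le c R).trans_eq Nat.choose_symm_add.symm
  calc _ ≤ #(deletionBall c R) • (N : ℝ)⁻¹ := sum_le_card_nsmul _ _ _ hterm
    _ ≤ 1 := by
      rw [nsmul_eq_mul]
      exact mul_inv_le_one_of_le₀ (by exact_mod_cast hcard) (Nat.cast_nonneg N)

end Switches

section Words

variable (α : Type*) [Fintype α]

def words (n : ℕ) : Finset (List α) :=
  (univ : Finset (Fin n → α)).map ⟨List.ofFn, List.ofFn_injective⟩

variable {α}

lemma mem_words {n : ℕ} {y : List α} : y ∈ words α n ↔ y.length = n := by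
  simp only [words, mem_map, mem_univ, true_and, Function.Embedding.coeFn_mk]
  constructor
  · rintro ⟨f, rfl⟩
    exact List.length_ofFn
  · rintro rfl
    exact ⟨_, List.ofFn_getElem⟩

lemma sum_words_succ {M : Type*} [AddCommMonoid M] (f : List α → M) (n : ℕ) :
    ∑ y ∈ words α (n + 1), f y = ∑ a, ∑ y ∈ words α n, f (a :: y) := by
  simp only [words, sum_map, Function.Embedding.coeFn_mk]
  rw [← (Fin.consEquiv fun _ => α).sum_comp, Fintype.sum_prod_type]
  simp [Fin.consEquiv, List.ofFn_succ]

variable [DecidableEq α] {R : Type*} [CommRing R]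

theorem sum_words_switches_cons (w : ℕ → R) (a : α) (k : ℕ) :
    ∑ y ∈ words α k, w (switches (a :: y)) =
      ∑ r ∈ range (k + 1), ((Fintype.card α : R) - 1) ^ r * k.choose r * w r := by
  induction k generalizing w a with
  | zero => simp [words, switches]
  | succ k ih =>
    set x : R := (Fintype.card α : R) - 1
    have hcard : (#(univ.erase a) : R) = x := by
      rw [card_erase_of_mem (mem_univ a), card_univ, Nat.cast_sub (Fintype.card_pos_iff.mpr ⟨a⟩),
        Nat.cast_one]
    have hself : ∑ y ∈ words α k, w (switches (a :: a :: y)) =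
        ∑ r ∈ range (k + 1), x ^ r * k.choose r * w r := by
      simp_rw [switches_cons_cons, if_pos, zero_add]
      exact ih w a
    have hother : ∀ b ∈ univ.erase a, ∑ y ∈ words α k, w (switches (a :: b :: y)) =
        ∑ r ∈ range (k + 1), x ^ r * k.choose r * w (r + 1) := by
      intro b hb
      simp_rw [switches_cons_cons, if_neg (ne_of_mem_erase hb).symm, add_comm 1]
      exact ih (fun s => w (s + 1)) b
    rw [sum_words_succ, ← add_sum_erase _ _ (mem_univ a), hself, sum_congr rfl hother, sum_const,
      nsmul_eq_mul, hcard, sum_range_choose_succ_mul]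

theorem sum_words_switches (w : ℕ → R) (k : ℕ) :
    ∑ y ∈ words α (k + 1), w (switches y) =
      Fintype.card α * ∑ r ∈ range (k + 1), ((Fintype.card α : R) - 1) ^ r * k.choose r * w r := by
  simp_rw [sum_words_succ, sum_words_switches_cons, sum_const, card_univ, nsmul_eq_mul]

end Words

end DeletionCovering

open DeletionCovering in
theorem deletion_covering_lower_bound_general (q n R : ℕ)
    (C : Finset (List (Fin q)))
    (hlen : ∀ c ∈ C, c.length = n)
    (hcov : ∀ y : List (Fin q), y.length = n - R → ∃ c ∈ C, y.Sublist c) :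
    (q : ℝ) * ∑ r ∈ Finset.range (n - R),
      ((q : ℝ) - 1) ^ r * ((n - R - 1).choose r : ℝ) / ((r + 3 * R).choose R : ℝ)
      ≤ (C.card : ℝ) := by
  rcases Nat.eq_zero_or_pos (n - R) with hm | hm
  · simp [hm]
  obtain ⟨k, hk⟩ := Nat.exists_eq_add_one.mpr hm
  rw [hk, Nat.add_sub_cancel]
  calc _ = ∑ y ∈ words (Fin q) (k + 1), (((switches y + 3 * R).choose R : ℕ) : ℝ)⁻¹ := by
        rw [sum_words_switches (fun s => (((s + 3 * R).choose R : ℕ) : ℝ)⁻¹) k, Fintype.card_fin]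
        simp_rw [div_eq_mul_inv]
    _ ≤ ∑ c ∈ C, ∑ y ∈ deletionBall c R, (((switches y + 3 * R).choose R : ℕ) : ℝ)⁻¹ := by
        refine sum_le_sum_sum_of_forall_exists_mem (fun _ => by positivity) fun y hy => ?_
        have hylen := mem_words.mp hy
        obtain ⟨c, hc, hyc⟩ := hcov y (by omega)
        exact ⟨c, hc, mem_deletionBall.mpr ⟨hyc, by have := hlen c hc; omega⟩⟩
    _ ≤ ∑ _c ∈ C, 1 := sum_le_sum fun c _ => sum_deletionBall_inv_choose_le_one c R
    _ = C.card := by simp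

/-- Sphere-covering lower bound for `R`-deletion-covering codes:
every `R`-deletion-covering code `C ⊆ Σ_q^n` (with `0 < R < n`) satisfies
`|C| ≥ q · ∑_{r=1}^{n-R} (q-1)^(r-1) C(n-R-1, r-1) / C(r+3R-1, R)`
(the sum below is reindexed with `r` running from `0` to `n-R-1`). -/
theorem deletion_covering_lower_bound (q n R : ℕ) (hq : 2 ≤ q) (hR : 0 < R) (hRn : R < n)
    (C : Finset (List (Fin q)))
    (hlen : ∀ c ∈ C, c.length = n)
    (hcov : ∀ y : List (Fin q), y.length = n - R → ∃ c ∈ C, y.Sublist c) :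
    (q : ℝ) * ∑ r ∈ Finset.range (n - R),
      ((q : ℝ) - 1) ^ r * ((n - R - 1).choose r : ℝ) / ((r + 3 * R).choose R : ℝ)
      ≤ (C.card : ℝ) :=
  deletion_covering_lower_bound_general q n R C hlen hcov
end

section
/- For all integers q ≥ 2 and n ≥ 2, every single-deletion-covering code C ⊆ Σ_q^n satisfies |C| ≥ q^n (n−2) / ((q−1) n (n+1)); equivalently, K_D^q(n,1) ≥ q^n(n−2)/((q−1)n(n+1)). -/
/-!
Give a word `y` the weight `1 / (runs y + 2)`. A word `c` has at most `runs c` distinct one-letter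
deletions, and a deletion destroys at most two runs, so the deletions of `c` carry total weight at
most `1`. Hence a single-deletion-covering code has at least as many words as the total weight of
`Σ_q^(n-1)`. Counting words by their number of runs, this weight is
`q ∑_k C(n-2,k) (q-1)^k / (k+3)`, whose closed form (from the factorial moments of the binomial
expansion) is at least `q^n (n-2) / ((q-1) n (n+1))` when `q ≥ 2`.
-/

open Finset

namespace List

variable {α : Type*} [DecidableEq α]

def runs : List α → ℕ
  | [] => 0
  | [_] => 1
  | a :: b :: t => runs (b :: t) + if a = b then 0 else 1

@[simp] lemma runs_singleton (a : α) : [a].runs = 1 := rfl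

lemma runs_cons_cons (a b : α) (t : List α) :
    (a :: b :: t).runs = (b :: t).runs + if a = b then 0 else 1 := rfl

theorem runs_le_runs_eraseIdx_add_two :
    ∀ (l : List α) (i : ℕ), l.runs ≤ (l.eraseIdx i).runs + 2
  | [], _ => by simp
  | [a], i => by cases i <;> simp
  | a :: b :: t, 0 => by
      rw [eraseIdx_cons_zero, runs_cons_cons]
      split_ifs <;> omega
  | a :: b :: [], 1 => by
      simp only [eraseIdx_cons_succ, eraseIdx_cons_zero, runs_cons_cons, runs_singleton]
      split_ifs <;> omega
  | a :: b :: c :: t, 1 => by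
      simp only [eraseIdx_cons_succ, eraseIdx_cons_zero, runs_cons_cons]
      split_ifs <;> omega
  | a :: b :: t, i + 2 => by
      have := runs_le_runs_eraseIdx_add_two (b :: t) (i + 1)
      simp only [eraseIdx_cons_succ, runs_cons_cons] at *
      split_ifs <;> omega

def deletions (l : List α) : Finset (List α) :=
  (Finset.range l.length).image l.eraseIdx

lemma deletions_cons (a : α) (l : List α) :
    (a :: l).deletions = insert l (l.deletions.image (a :: ·)) := by
  simp only [deletions, length_cons, Finset.range_add_one', Finset.image_insert,
    Finset.map_eq_image, Finset.image_image]
  rfl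

theorem card_deletions_le_runs : ∀ l : List α, #l.deletions ≤ l.runs
  | [] => by simp [deletions]
  | [a] => by simp [deletions]
  | a :: b :: t => by
      have ih := card_deletions_le_runs (b :: t)
      rw [deletions_cons, runs_cons_cons]
      split_ifs with hab
      · subst hab
        have hmem : a :: t ∈ (a :: t).deletions.image (a :: ·) :=
          Finset.mem_image.mpr ⟨t, Finset.mem_image.mpr ⟨0, by simp, rfl⟩, rfl⟩
        rw [Finset.insert_eq_of_mem hmem]
        exact Finset.card_image_le.trans ih
      · exact (Finset.card_insert_le _ _).trans (by simpa using Finset.card_image_le.trans ih)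

theorem Sublist.mem_deletions {y c : List α} (h : y <+ c) (hl : y.length + 1 = c.length) :
    y ∈ c.deletions := by
  induction h with
  | slnil => simp at hl
  | @cons l₁ l₂ a h _ =>
      rw [deletions_cons, h.eq_of_length (by simpa using hl)]
      exact Finset.mem_insert_self _ _
  | @cons_cons l₁ l₂ a _ ih =>
      rw [deletions_cons]
      exact Finset.mem_insert_of_mem (Finset.mem_image_of_mem _ (ih (by simpa using hl)))

theorem sum_deletions_inv_runs_add_two_le_one (c : List α) :
    ∑ y ∈ c.deletions, ((y.runs : ℝ) + 2)⁻¹ ≤ 1 := by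
  have hterm : ∀ y ∈ c.deletions, ((y.runs : ℝ) + 2)⁻¹ ≤ (c.runs : ℝ)⁻¹ := by
    intro y hy
    have hc : (0 : ℝ) < c.runs := by
      exact_mod_cast (Finset.card_pos.mpr ⟨y, hy⟩).trans_le (card_deletions_le_runs c)
    obtain ⟨i, -, rfl⟩ := Finset.mem_image.mp hy
    exact inv_anti₀ hc (by exact_mod_cast runs_le_runs_eraseIdx_add_two c i)
  calc ∑ y ∈ c.deletions, ((y.runs : ℝ) + 2)⁻¹
      ≤ #c.deletions * (c.runs : ℝ)⁻¹ := by simpa using Finset.sum_le_sum hterm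
    _ ≤ c.runs * (c.runs : ℝ)⁻¹ := by gcongr; exact card_deletions_le_runs c
    _ ≤ 1 := mul_inv_le_one

end List

theorem sum_inv_runs_add_two_le_card {α : Type*} [DecidableEq α] (S C : Finset (List α))
    (hcov : ∀ y ∈ S, ∃ c ∈ C, y.length + 1 = c.length ∧ y.Sublist c) :
    ∑ y ∈ S, ((y.runs : ℝ) + 2)⁻¹ ≤ #C := by
  have hsub : S ⊆ (C.sigma List.deletions).image Sigma.snd := by
    intro y hy
    obtain ⟨c, hc, hlen, hsub⟩ := hcov y hy
    exact mem_image.mpr ⟨⟨c, y⟩, mem_sigma.mpr ⟨hc, hsub.mem_deletions hlen⟩, rfl⟩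
  calc ∑ y ∈ S, ((y.runs : ℝ) + 2)⁻¹
      ≤ ∑ y ∈ (C.sigma List.deletions).image Sigma.snd, ((y.runs : ℝ) + 2)⁻¹ :=
        sum_le_sum_of_subset_of_nonneg hsub fun _ _ _ => by positivity
    _ ≤ ∑ p ∈ C.sigma List.deletions, ((p.2.runs : ℝ) + 2)⁻¹ :=
        sum_image_le_of_nonneg fun _ _ => by positivity
    _ = ∑ c ∈ C, ∑ y ∈ c.deletions, ((y.runs : ℝ) + 2)⁻¹ := sum_sigma _ _ _
    _ ≤ ∑ _c ∈ C, 1 := sum_le_sum fun c _ => c.sum_deletions_inv_runs_add_two_le_one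
    _ = #C := by simp

section Census

variable (α : Type*) [Fintype α]

def words (m : ℕ) : Finset (List α) :=
  (univ : Finset (Fin m → α)).map ⟨List.ofFn, List.ofFn_injective⟩

variable {α}

lemma mem_words {m : ℕ} {y : List α} : y ∈ words α m ↔ y.length = m := by
  simp only [words, mem_map, mem_univ, true_and, Function.Embedding.coeFn_mk]
  constructor
  · rintro ⟨v, rfl⟩
    exact List.length_ofFn
  · rintro rfl
    exact ⟨y.get, List.ofFn_get y⟩

lemma sum_words_succ {M : Type*} [AddCommMonoid M] (m : ℕ) (f : List α → M) :
    ∑ y ∈ words α (m + 1), f y = ∑ a, ∑ y ∈ words α m, f (a :: y) := by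
  simp only [words, sum_map]
  rw [← (Fin.consEquiv fun _ => α).sum_comp, Fintype.sum_prod_type]
  simp [Fin.consEquiv, List.ofFn_succ]

variable [DecidableEq α] {R : Type*} [CommRing R]

lemma sum_runs_cons_cons (g : ℕ → R) (b : α) (t : List α) :
    ∑ a : α, g (a :: b :: t).runs
      = g (b :: t).runs + (Fintype.card α - 1) * g ((b :: t).runs + 1) := by
  have hchange : ∀ a ∈ univ.erase b, g (a :: b :: t).runs = g ((b :: t).runs + 1) :=
    fun a ha => by rw [List.runs_cons_cons, if_neg (ne_of_mem_erase ha)]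
  rw [← add_sum_erase _ _ (mem_univ b), sum_congr rfl hchange, sum_const,
    card_erase_of_mem (mem_univ b), card_univ, nsmul_eq_mul,
    Nat.cast_pred (Fintype.card_pos_iff.mpr ⟨b⟩), List.runs_cons_cons, if_pos rfl, add_zero]

theorem sum_words_runs (g : ℕ → R) (m : ℕ) :
    ∑ y ∈ words α (m + 1), g y.runs
      = Fintype.card α * ∑ k ∈ range (m + 1),
          (m.choose k : R) * ((Fintype.card α - 1) ^ k * g (k + 1)) := by
  induction m generalizing g with
  | zero => simp [words]
  | succ m ih =>
    set t : R := Fintype.card α - 1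
    have hprepend : ∀ y ∈ words α (m + 1),
        ∑ a : α, g (a :: y).runs = g y.runs + t * g (y.runs + 1) := by
      intro y hy
      obtain ⟨b, l, rfl⟩ := List.exists_cons_of_length_eq_add_one (mem_words.mp hy)
      exact sum_runs_cons_cons g b l
    have hpascal := Finset.sum_choose_succ_mul (fun i _ => t ^ i * g (i + 1)) m
    have hshift : ∑ i ∈ range (m + 1), (m.choose i : R) * (t ^ (i + 1) * g (i + 1 + 1))
        = t * ∑ i ∈ range (m + 1), (m.choose i : R) * (t ^ i * g (i + 1 + 1)) := by
      rw [mul_sum]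
      exact sum_congr rfl fun i _ => by ring
    rw [sum_words_succ, sum_comm, sum_congr rfl hprepend, sum_add_distrib, ← mul_sum, ih g,
      ih fun k => g (k + 1), hpascal, hshift]
    ring

end Census

theorem Nat.choose_mul_add_descFactorial (n k s : ℕ) :
    n.choose k * (n + s).descFactorial s = (n + s).choose (k + s) * (k + s).descFactorial s := by
  induction s with
  | zero => simp
  | succ s ih =>
    rw [← add_assoc, ← add_assoc, succ_descFactorial_succ, succ_descFactorial_succ,
      mul_left_comm, ih, ← mul_assoc, ← mul_assoc, add_one_mul_choose_eq, mul_right_comm]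

theorem sum_range_descFactorial_mul_choose_mul_pow {R : Type*} [CommSemiring R] (x : R)
    (r N : ℕ) :
    ∑ j ∈ range (N + 1), (j.descFactorial r : R) * N.choose j * x ^ j
      = N.descFactorial r * x ^ r * (x + 1) ^ (N - r) := by
  induction r generalizing N with
  | zero => simp [add_pow, mul_comm]
  | succ r ih =>
    cases N with
    | zero => simp
    | succ M =>
      have hterm : ∀ j ∈ range (M + 1),
          ((j + 1).descFactorial (r + 1) : R) * (M + 1).choose (j + 1) * x ^ (j + 1)
            = (M + 1) * x * ((j.descFactorial r : R) * M.choose j * x ^ j) := by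
        intro j _
        have hnat : (j + 1).descFactorial (r + 1) * (M + 1).choose (j + 1)
            = (M + 1) * (j.descFactorial r * M.choose j) := by
          rw [Nat.succ_descFactorial_succ, mul_comm (j + 1), mul_assoc,
            mul_comm (j + 1) ((M + 1).choose (j + 1)), ← Nat.add_one_mul_choose_eq, mul_left_comm]
        rw [← Nat.cast_mul, hnat]
        simp only [Nat.cast_mul, Nat.cast_add, Nat.cast_one]
        ring
      rw [sum_range_succ', sum_congr rfl hterm, ← mul_sum, ih M, Nat.succ_descFactorial_succ]
      simp only [Nat.zero_descFactorial_succ, Nat.cast_zero, zero_mul, add_zero,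
        Nat.add_sub_add_right, Nat.cast_mul, Nat.cast_add, Nat.cast_one]
      ring

theorem sum_choose_mul_pow_div_add_three {K : Type*} [Field K] [CharZero K] (x : K) (n : ℕ) :
    (∑ k ∈ range (n + 1), (n.choose k : K) * x ^ k / (k + 3))
        * ((n + 1) * (n + 2) * (n + 3) * x ^ 3)
      = (n + 3) * (n + 2) * x ^ 2 * (x + 1) ^ (n + 1) - 2 * (n + 3) * x * (x + 1) ^ (n + 2)
        + 2 * (x + 1) ^ (n + 3) - 2 := by
  -- `C(n,k) (n+1)(n+2)(n+3) / (k+3) = (k+1)(k+2) C(n+3,k+3)`, and `(j-1)(j-2)` is a combination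
  -- of the falling factorials `j.descFactorial r`, `r ≤ 2`.
  set F : ℕ → K := fun j => ((j : K) - 1) * ((j : K) - 2) * (n + 3).choose j * x ^ j
  have hterm : ∀ k ∈ range (n + 1),
      (n.choose k : K) * x ^ k / (k + 3) * ((n + 1) * (n + 2) * (n + 3) * x ^ 3) = F (3 + k) := by
    intro k _
    have h := congrArg (Nat.cast : ℕ → K) (Nat.choose_mul_add_descFactorial n k 3)
    simp only [Nat.descFactorial, Nat.reduceSubDiff, Nat.add_one_sub_one, tsub_zero, mul_one,
      Nat.cast_mul, Nat.cast_add, Nat.cast_one, Nat.cast_ofNat] at h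
    have hk : (k : K) + 3 ≠ 0 := by exact_mod_cast Nat.succ_ne_zero (k + 2)
    simp only [F, add_comm 3 k]
    push_cast
    field_simp
    linear_combination x ^ (k + 3) * h
  have hmoments : ∑ j ∈ range (n + 3 + 1), F j
      = (n + 3) * (n + 2) * x ^ 2 * (x + 1) ^ (n + 1) - 2 * (n + 3) * x * (x + 1) ^ (n + 2)
        + 2 * (x + 1) ^ (n + 3) := by
    have hF : ∀ j, F j = (j.descFactorial 2 : K) * (n + 3).choose j * x ^ j
        - 2 * ((j.descFactorial 1 : K) * (n + 3).choose j * x ^ j)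
        + 2 * ((j.descFactorial 0 : K) * (n + 3).choose j * x ^ j) := by
      intro j
      simp only [F, Nat.cast_descFactorial_two, Nat.descFactorial_one, Nat.descFactorial_zero]
      ring
    simp only [hF, sum_add_distrib, sum_sub_distrib, ← mul_sum,
      sum_range_descFactorial_mul_choose_mul_pow]
    simp only [Nat.descFactorial_succ, Nat.add_one_sub_one, tsub_zero, Nat.descFactorial_zero,
      mul_one, Nat.cast_mul, Nat.cast_add, Nat.cast_ofNat, Nat.reduceSubDiff, pow_one,
      Nat.cast_one, pow_zero, one_mul]
    ring
  have hlow : ∑ j ∈ range 3, F j = 2 := by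
    simp [F, sum_range_succ]
  have hsplit := sum_range_add F 3 (n + 1)
  rw [show 3 + (n + 1) = n + 3 + 1 by ring, hmoments, hlow] at hsplit
  rw [sum_mul, sum_congr rfl hterm]
  linear_combination -hsplit

theorem le_sum_choose_mul_pow_div_add_three {x : ℝ} (hx : 1 ≤ x) (n : ℕ) :
    n * (x + 1) ^ (n + 1) / (x * (n + 2) * (n + 3))
      ≤ ∑ k ∈ range (n + 1), (n.choose k : ℝ) * x ^ k / (k + 3) := by
  set A := ∑ k ∈ range (n + 1), (n.choose k : ℝ) * x ^ k / (k + 3)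
  have hpow : 1 ≤ (x + 1) ^ (n + 1) := one_le_pow₀ (by linarith)
  have hslack : 0 ≤ (x + 1) ^ (n + 1) * ((n + 1) * x * (x - 1) + 1) - 1 := by
    have hprod : 0 ≤ (n + 1) * x * (x - 1) := by
      have : 0 ≤ x - 1 := by linarith
      positivity
    nlinarith
  have hscaled : (n + 1) * x ^ 2 * (n * (x + 1) ^ (n + 1))
      ≤ (n + 1) * x ^ 2 * (A * (x * (n + 2) * (n + 3))) := by
    have hA : A * ((n + 1) * (n + 2) * (n + 3) * x ^ 3) = _ :=
      sum_choose_mul_pow_div_add_three x n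
    linear_combination 2 * hslack - hA
  rw [div_le_iff₀ (by positivity)]
  exact le_of_mul_le_mul_left hscaled (by positivity)

/-- Sphere-covering lower bound for single-deletion-covering codes:
every single-deletion-covering code `C ⊆ Σ_q^n` satisfies
`|C| ≥ q^n (n-2) / ((q-1) n (n+1))`. -/
theorem single_deletion_covering_lower_bound (q n : ℕ) (hq : 2 ≤ q) (hn : 2 ≤ n)
    (C : Finset (List (Fin q)))
    (hlen : ∀ c ∈ C, c.length = n)
    (hcov : ∀ y : List (Fin q), y.length = n - 1 → ∃ c ∈ C, y.Sublist c) :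
    (q : ℝ) ^ n * ((n : ℝ) - 2) / (((q : ℝ) - 1) * (n : ℝ) * ((n : ℝ) + 1))
      ≤ (C.card : ℝ) := by
  obtain ⟨m, rfl⟩ : ∃ m, n = m + 2 := ⟨n - 2, by omega⟩
  have hcover : ∑ y ∈ words (Fin q) (m + 1), ((y.runs : ℝ) + 2)⁻¹ ≤ #C := by
    refine sum_inv_runs_add_two_le_card _ C fun y hy => ?_
    obtain ⟨c, hc, hsub⟩ := hcov y (mem_words.mp hy)
    exact ⟨c, hc, by rw [mem_words.mp hy, hlen c hc], hsub⟩
  have hcensus : ∑ y ∈ words (Fin q) (m + 1), ((y.runs : ℝ) + 2)⁻¹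
      = q * ∑ k ∈ range (m + 1), (m.choose k : ℝ) * ((q : ℝ) - 1) ^ k / (k + 3) := by
    rw [sum_words_runs (fun r : ℕ => ((r : ℝ) + 2)⁻¹), Fintype.card_fin]
    congr 1
    refine sum_congr rfl fun k _ => ?_
    push_cast
    ring
  have hq1 : (1 : ℝ) ≤ q - 1 := by
    have : (2 : ℝ) ≤ q := by exact_mod_cast hq
    linarith
  calc (q : ℝ) ^ (m + 2) * (((m + 2 : ℕ) : ℝ) - 2)
        / ((q - 1) * ((m + 2 : ℕ) : ℝ) * ((m + 2 : ℕ) + 1))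
      = q * (m * ((q - 1 : ℝ) + 1) ^ (m + 1) / ((q - 1) * (m + 2) * (m + 3))) := by
        rw [sub_add_cancel]
        push_cast
        ring
    _ ≤ q * ∑ k ∈ range (m + 1), (m.choose k : ℝ) * ((q : ℝ) - 1) ^ k / (k + 3) := by
        gcongr
        exact le_sum_choose_mul_pow_div_add_three hq1 m
    _ ≤ #C := hcensus ▸ hcover
end

section
/- For every integer n ≥ 1 and every 0 ≤ a ≤ n, the Varshamov–Tenengolts code C_VT(n;a) = {c ∈ {0,1}^n : Σ_{i=1}^n i·c_i ≡ a (mod n+1)} is a single-deletion-covering code (every y ∈ {0,1}^{n−1} is a subsequence of some c ∈ C_VT(n;a)), and consequently K_D(n,1) ≤ 2^n/(n+1). -/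
/-- The finset of all binary words of length `n`, as lists over `Fin 2`. -/
def allBinWords (n : ℕ) : Finset (List (Fin 2)) :=
  (Finset.univ : Finset (Fin n → Fin 2)).image List.ofFn

/-- The VT syndrome `∑_{i=1}^n i · c_i` of a binary word `c`. -/
def vtSum (c : List (Fin 2)) : ℕ :=
  ∑ i ∈ Finset.range c.length, (i + 1) * ((c.getD i 0 : Fin 2) : ℕ)

/-- The Varshamov–Tenengolts code
`C_VT(n;a) = {c ∈ {0,1}^n : ∑_{i=1}^n i·c_i ≡ a (mod n+1)}`. -/
def CVT (n a : ℕ) : Finset (List (Fin 2)) :=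
  (allBinWords n).filter (fun c => vtSum c % (n + 1) = a)

/-- `KDbin n` is the minimum cardinality of a single-deletion-covering code of
binary length-`n` words. -/
noncomputable def KDbin (n : ℕ) : ℕ :=
  sInf {k : ℕ | ∃ C : Finset (List (Fin 2)),
    (∀ c ∈ C, c.length = n) ∧
    (∀ y : List (Fin 2), y.length = n - 1 → ∃ c ∈ C, y.Sublist c) ∧
    C.card = k}

/-!
Inserting a bit `b` into `y` at position `i` raises the VT syndrome by `(i + 1) b + w i`, where
`w i` is the weight of the suffix `y.drop i`. Since `w` decreases from `weight y` to `0` in steps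
of at most one, the increments `w i` of the insertions of `0` take every value in
`[0, weight y]`, and the increments `i + 1 + w i` of the insertions of `1` take every value in
`[weight y + 1, |y| + 1]`. Hence a single insertion reaches every residue modulo `|y| + 2`, i.e.
every VT code of length `|y| + 1` covers `y`. The `n + 1` codes `C_VT(n; a)` partition `{0,1}^n`,
so one of them has at most `2^n / (n + 1)` words.
-/

open Finset

def weight (c : List (Fin 2)) : ℕ := (c.map Fin.val).sum

@[simp] lemma weight_nil : weight [] = 0 := rfl

@[simp] lemma weight_cons (x : Fin 2) (l : List (Fin 2)) : weight (x :: l) = x + weight l := by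
  simp [weight]

lemma weight_tail_le (l : List (Fin 2)) : weight l.tail ≤ weight l := by
  cases l <;> simp

lemma weight_le_weight_tail_add_one (l : List (Fin 2)) : weight l ≤ weight l.tail + 1 := by
  cases l with
  | nil => simp
  | cons x l =>
    have := x.isLt
    simp only [List.tail_cons, weight_cons]
    omega

lemma weight_insertIdx {y : List (Fin 2)} {i : ℕ} (hi : i ≤ y.length) (b : Fin 2) :
    weight (y.insertIdx i b) = b + weight y := by
  simpa [weight] using ((List.perm_insertIdx b y hi).map Fin.val).sum_eq

lemma sum_range_getD_eq_weight (l : List (Fin 2)) :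
    ∑ i ∈ range l.length, (l.getD i 0 : ℕ) = weight l := by
  induction l with
  | nil => rfl
  | cons x l ih =>
    rw [List.length_cons, sum_range_succ']
    simp only [List.getD_cons_succ, List.getD_cons_zero, ih, weight_cons]
    ring

lemma vtSum_nil : vtSum [] = 0 := rfl

lemma vtSum_cons (x : Fin 2) (l : List (Fin 2)) :
    vtSum (x :: l) = x + weight l + vtSum l := by
  simp only [vtSum, List.length_cons, sum_range_succ', List.getD_cons_succ, List.getD_cons_zero,
    add_mul, one_mul, sum_add_distrib, sum_range_getD_eq_weight]
  ring

lemma vtSum_insertIdx {y : List (Fin 2)} {i : ℕ} (hi : i ≤ y.length) (b : Fin 2) :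
    vtSum (y.insertIdx i b) = vtSum y + (i + 1) * b + weight (y.drop i) := by
  induction y generalizing i with
  | nil =>
    obtain rfl : i = 0 := by simpa using hi
    simp [vtSum_cons, vtSum_nil, add_comm]
  | cons x y ih =>
    cases i with
    | zero => simp only [List.insertIdx_zero, vtSum_cons, List.drop_zero]; ring
    | succ i =>
      have hi : i ≤ y.length := by simpa using hi
      rw [List.insertIdx_succ_cons, vtSum_cons, vtSum_cons, weight_insertIdx hi, ih hi,
        List.drop_succ_cons]
      ring

lemma Nat.exists_eq_of_map_succ_le_succ {f : ℕ → ℕ} {m t : ℕ}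
    (hf : ∀ i < m, f (i + 1) ≤ f i + 1) (h0 : f 0 ≤ t) (hm : t ≤ f m) : ∃ i ≤ m, f i = t := by
  induction m with
  | zero => exact ⟨0, le_rfl, le_antisymm h0 hm⟩
  | succ m ih =>
    by_cases h : t ≤ f m
    · obtain ⟨i, hi, hfi⟩ := ih (fun i hi => hf i (by omega)) h
      exact ⟨i, by omega, hfi⟩
    · exact ⟨m + 1, le_rfl, by have := hf m (by omega); omega⟩

lemma exists_weight_drop_eq (y : List (Fin 2)) {t : ℕ} (ht : t ≤ weight y) :
    ∃ i ≤ y.length, weight (y.drop i) = t := by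
  obtain ⟨j, hj, hwj⟩ := Nat.exists_eq_of_map_succ_le_succ
    (f := fun j => weight (y.drop (y.length - j))) (m := y.length)
    (fun j hj => by
      rw [show y.length - j = y.length - (j + 1) + 1 by omega, ← List.tail_drop]
      exact weight_le_weight_tail_add_one _)
    (by simp) (by simpa using ht)
  exact ⟨y.length - j, by omega, hwj⟩

lemma exists_weight_drop_add_eq (y : List (Fin 2)) {t : ℕ} (h₁ : weight y < t)
    (h₂ : t ≤ y.length + 1) : ∃ i ≤ y.length, weight (y.drop i) + i + 1 = t := by
  refine Nat.exists_eq_of_map_succ_le_succ (fun j _ => ?_) (by simpa using h₁) (by simpa using h₂)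
  have := weight_tail_le (y.drop j)
  rw [List.tail_drop] at this
  omega

lemma exists_insertIdx_vtSum_eq (y : List (Fin 2)) {t : ℕ} (ht : t ≤ y.length + 1) :
    ∃ i ≤ y.length, ∃ b : Fin 2, vtSum (y.insertIdx i b) = vtSum y + t := by
  rcases le_or_gt t (weight y) with hty | hty
  · obtain ⟨i, hi, hwi⟩ := exists_weight_drop_eq y hty
    exact ⟨i, hi, 0, by simp [vtSum_insertIdx hi, hwi]⟩
  · obtain ⟨i, hi, hwi⟩ := exists_weight_drop_add_eq y hty ht
    exact ⟨i, hi, 1, by rw [vtSum_insertIdx hi, Fin.val_one]; omega⟩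

lemma Nat.exists_lt_add_mod_eq (s : ℕ) {a M : ℕ} (ha : a < M) : ∃ t < M, (s + t) % M = a := by
  refine ⟨(a + (M - s % M)) % M, Nat.mod_lt _ (by omega), ?_⟩
  have hs : s % M < M := Nat.mod_lt s (by omega)
  rw [Nat.add_mod_mod, ← Nat.mod_add_mod, show s % M + (a + (M - s % M)) = a + M by omega,
    Nat.add_mod_right, Nat.mod_eq_of_lt ha]

lemma mem_allBinWords {n : ℕ} {c : List (Fin 2)} : c ∈ allBinWords n ↔ c.length = n := by
  constructor
  · intro h
    obtain ⟨f, -, rfl⟩ := mem_image.1 h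
    exact List.length_ofFn
  · rintro rfl
    exact mem_image.2 ⟨c.get, mem_univ _, List.ofFn_get c⟩

lemma card_allBinWords (n : ℕ) : #(allBinWords n) = 2 ^ n := by
  simp [allBinWords, card_image_of_injective _ List.ofFn_injective]

lemma mem_CVT {n a : ℕ} {c : List (Fin 2)} :
    c ∈ CVT n a ↔ c.length = n ∧ vtSum c % (n + 1) = a := by
  rw [CVT, mem_filter, mem_allBinWords]

theorem exists_sublist_mem_CVT {n a : ℕ} (hn : 1 ≤ n) (ha : a ≤ n) {y : List (Fin 2)}
    (hy : y.length = n - 1) : ∃ c ∈ CVT n a, y.Sublist c := by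
  obtain rfl : n = y.length + 1 := by omega
  obtain ⟨t, ht, hmod⟩ :=
    Nat.exists_lt_add_mod_eq (vtSum y) (a := a) (M := y.length + 2) (by omega)
  obtain ⟨i, hi, b, hvt⟩ := exists_insertIdx_vtSum_eq y (t := t) (by omega)
  exact ⟨y.insertIdx i b, mem_CVT.2 ⟨List.length_insertIdx_of_le_length hi b, by rwa [hvt]⟩,
    List.sublist_insertIdx y i b⟩

lemma KDbin_le_card {n : ℕ} {C : Finset (List (Fin 2))} (hlen : ∀ c ∈ C, c.length = n)
    (hcov : ∀ y : List (Fin 2), y.length = n - 1 → ∃ c ∈ C, y.Sublist c) : KDbin n ≤ #C :=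
  Nat.sInf_le ⟨C, hlen, hcov, rfl⟩

lemma exists_card_CVT_le (n : ℕ) : ∃ a ≤ n, (#(CVT n a) : ℝ) ≤ 2 ^ n / ((n : ℝ) + 1) := by
  have hcard : (#(allBinWords n) : ℝ) ≤ #(range (n + 1)) • (2 ^ n / ((n : ℝ) + 1)) := by
    rw [card_allBinWords, card_range, nsmul_eq_mul]
    field_simp
    push_cast
    rw [mul_comm]
  obtain ⟨a, ha, hle⟩ := exists_card_fiber_le_of_card_le_nsmul nonempty_range_add_one hcard
    (f := fun c => vtSum c % (n + 1))
  exact ⟨a, Nat.lt_succ_iff.1 (mem_range.1 ha), hle⟩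

/-- For `n ≥ 1` and `0 ≤ a ≤ n`, the Varshamov–Tenengolts code `C_VT(n;a)` is a
single-deletion-covering code, and consequently `K_D(n,1) ≤ 2^n/(n+1)`. -/
theorem vt_is_single_deletion_covering (n a : ℕ) (hn : 1 ≤ n) (ha : a ≤ n) :
    (∀ y : List (Fin 2), y.length = n - 1 → ∃ c ∈ CVT n a, y.Sublist c) ∧
    (KDbin n : ℝ) ≤ 2 ^ n / ((n : ℝ) + 1) := by
  refine ⟨fun y hy => exists_sublist_mem_CVT hn ha hy, ?_⟩
  obtain ⟨b, hb, hcard⟩ := exists_card_CVT_le n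
  calc (KDbin n : ℝ) ≤ #(CVT n b) := by
        exact_mod_cast KDbin_le_card (fun c hc => (mem_CVT.1 hc).1)
          (fun y hy => exists_sublist_mem_CVT hn hb hy)
    _ ≤ 2 ^ n / ((n : ℝ) + 1) := hcard
end

section
/- For all integers n ≥ 1 and q ≥ 2, there exists a single-deletion-covering code C ⊆ Σ_q^n with |C| ≤ q^n / ((n+1)·⌊q/2⌋); equivalently, K_D^q(n,1) ≤ q^n/((n+1)⌊q/2⌋). -/
namespace SDC

variable {q : ℕ}

/-- sum of parities -/
def psum (y : List (Fin q)) : ℕ := (y.map (fun a => a.val % 2)).sum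

/-- sum of halves -/
def usum (y : List (Fin q)) : ℕ := (y.map (fun a => a.val / 2)).sum

/-- VT weighted checksum -/
def vt : List (Fin q) → ℕ
  | [] => 0
  | a :: l => a.val % 2 + psum l + vt l

lemma psum_cons (a : Fin q) (l : List (Fin q)) : psum (a :: l) = a.val % 2 + psum l := by
  simp [psum]

lemma psum_append (l₁ l₂ : List (Fin q)) : psum (l₁ ++ l₂) = psum l₁ + psum l₂ := by
  simp [psum]

lemma usum_append (l₁ l₂ : List (Fin q)) : usum (l₁ ++ l₂) = usum l₁ + usum l₂ := by
  simp [usum]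

lemma usum_cons (a : Fin q) (l : List (Fin q)) : usum (a :: l) = a.val / 2 + usum l := by
  simp [usum]

lemma takedrop (y : List (Fin q)) (p : ℕ) : y.take p ++ y.drop p = y := List.take_append_drop _ _

lemma vt_insert (v : Fin q) : ∀ (y : List (Fin q)) (p : ℕ), p ≤ y.length →
    vt (y.take p ++ v :: y.drop p) = vt y + (p + 1) * (v.val % 2) + psum (y.drop p) := by
  intro y
  induction y with
  | nil =>
    intro p hp
    have hp0 : p = 0 := by simpa using hp
    subst hp0; simp [vt, psum]
  | cons a l ih =>
    intro p hp
    cases p with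
    | zero => simp [vt, psum_cons]; ring
    | succ p' =>
      simp only [List.take_succ_cons, List.drop_succ_cons, List.cons_append]
      have h' : p' ≤ l.length := by simpa using hp
      rw [vt, vt, psum_append, psum_cons, ih p' h']
      have := takedrop l p'
      have hps : psum (l.take p') + psum (l.drop p') = psum l := by
        rw [← psum_append, takedrop]
      ring_nf
      omega

lemma usum_insert (v : Fin q) (y : List (Fin q)) (p : ℕ) :
    usum (y.take p ++ v :: y.drop p) = usum y + v.val / 2 := by
  rw [usum_append, usum_cons]
  have := usum_append (y.take p) (y.drop p)
  rw [takedrop] at this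
  omega

/-- Claim A: every value `d ≤ psum y` is `psum (y.drop p)` for some `p ≤ y.length`. -/
lemma claimA : ∀ (y : List (Fin q)) (d : ℕ), d ≤ psum y →
    ∃ p ≤ y.length, psum (y.drop p) = d := by
  intro y
  induction y with
  | nil =>
    intro d hd
    simp only [psum, List.map_nil, List.sum_nil, Nat.le_zero] at hd
    exact ⟨0, by simp, by simp [psum, hd]⟩
  | cons a l ih =>
    intro d hd
    by_cases h : d ≤ psum l
    · obtain ⟨p, hp, hv⟩ := ih d h
      exact ⟨p + 1, by simpa using Nat.succ_le_succ hp, by simpa using hv⟩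
    · refine ⟨0, by simp, ?_⟩
      rw [psum_cons] at hd
      simp only [List.drop_zero, psum_cons]
      have := Nat.mod_lt a.val (show 0 < 2 by norm_num)
      omega

/-- Claim B: every value in `(psum y, y.length + 1]` is `p + 1 + psum (y.drop p)`. -/
lemma claimB : ∀ (y : List (Fin q)) (d : ℕ), psum y < d → d ≤ y.length + 1 →
    ∃ p ≤ y.length, p + 1 + psum (y.drop p) = d := by
  intro y
  induction y with
  | nil =>
    intro d h1 h2
    simp only [List.length_nil] at h2
    refine ⟨0, le_refl _, ?_⟩
    simp only [List.drop_nil, psum, List.map_nil, List.sum_nil] at h1 ⊢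
    omega
  | cons a l ih =>
    intro d h1 h2
    rw [psum_cons] at h1
    by_cases h : d = 1 + psum (a :: l)
    · exact ⟨0, by simp, by rw [List.drop_zero]; omega⟩
    · have hgt : psum l < d - 1 := by rw [psum_cons] at h; omega
      have hle : d - 1 ≤ l.length + 1 := by simp at h2; omega
      obtain ⟨p, hp, hv⟩ := ih (d - 1) hgt hle
      refine ⟨p + 1, by simpa using Nat.succ_le_succ hp, ?_⟩
      simp only [List.drop_succ_cons]
      omega

/-- combined: every `δ ≤ y.length + 1` is achievable as `(p+1)*c + psum (y.drop p)` with `c ≤ 1`. -/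
lemma claimAB (y : List (Fin q)) (δ : ℕ) (hδ : δ ≤ y.length + 1) :
    ∃ p ≤ y.length, ∃ c ≤ 1, (p + 1) * c + psum (y.drop p) = δ := by
  by_cases h : δ ≤ psum y
  · obtain ⟨p, hp, hv⟩ := claimA y δ h
    exact ⟨p, hp, 0, by norm_num, by simpa using hv⟩
  · obtain ⟨p, hp, hv⟩ := claimB y δ (by omega) hδ
    exact ⟨p, hp, 1, le_refl _, by omega⟩

end SDC

open SDC in
/-- Existence of small single-deletion-covering codes over `Σ_q`:
there is a single-deletion-covering code `C ⊆ Σ_q^n` with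
`|C| ≤ q^n / ((n+1)·⌊q/2⌋)`, i.e. `K_D^q(n,1) ≤ q^n/((n+1)⌊q/2⌋)`. -/
theorem single_deletion_covering_upper_bound (n q : ℕ) (hn : 1 ≤ n) (hq : 2 ≤ q) :
    ∃ C : Finset (List (Fin q)),
      (∀ c ∈ C, c.length = n) ∧
      (∀ y : List (Fin q), y.length = n - 1 → ∃ c ∈ C, y.Sublist c) ∧
      (C.card : ℝ) ≤ (q : ℝ) ^ n / (((n : ℝ) + 1) * ((q / 2 : ℕ) : ℝ)) := by
  classical
  set m : ℕ := q / 2 with hm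
  have hm1 : 1 ≤ m := Nat.one_le_div_iff (by norm_num) |>.2 hq
  haveI : NeZero m := ⟨by omega⟩
  -- the classifying function
  set G := ZMod (n + 1) × ZMod m with hG
  let F : List (Fin q) → G := fun x => ((vt x : ZMod (n + 1)), (usum x : ZMod m))
  -- ambient finset of all length-n words, as vectors
  let big : Finset (List.Vector (Fin q) n) := Finset.univ
  have hmemb : ∀ v : List.Vector (Fin q) n, v ∈ big := fun v => Finset.mem_univ v
  have hbigcard : big.card = q ^ n := by
    simp [big, Finset.card_univ, card_vector]
  -- choose a small fiber
  have hGne : (Finset.univ : Finset G).Nonempty := Finset.univ_nonempty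
  obtain ⟨g, hgmem, hgmin⟩ := Finset.exists_min_image (Finset.univ : Finset G)
    (fun g => (big.filter (fun v => F v.val = g)).card) hGne
  -- the code
  refine ⟨(big.filter (fun v => F v.val = g)).image Subtype.val, ?_, ?_, ?_⟩
  · intro c hc
    obtain ⟨v, _, rfl⟩ := Finset.mem_image.1 hc
    exact v.2
  · -- covering property
    intro y hy
    -- targets
    have hlen : y.length + 1 = n := by omega
    set a : ZMod (n + 1) := g.1 with ha
    set s : ZMod m := g.2 with hs
    set δ : ℕ := (a - (vt y : ZMod (n + 1))).val with hδdef
    have hδ : δ ≤ y.length + 1 := by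
      have := ZMod.val_lt (a - (vt y : ZMod (n + 1)))
      omega
    obtain ⟨p, hp, c, hc, hval⟩ := claimAB y δ hδ
    set u : ℕ := (s - (usum y : ZMod m)).val with hu
    have hult : u < m := ZMod.val_lt _
    have hvlt : 2 * u + c < q := by omega
    set v : Fin q := ⟨2 * u + c, hvlt⟩ with hv
    set x : List (Fin q) := y.take p ++ v :: y.drop p with hx
    have hxlen : x.length = n := by
      simp only [hx, List.length_append, List.length_cons, List.length_take, List.length_drop]
      omega
    have hvmod : v.val % 2 = c := by simp [hv]; omega
    have hvdiv : v.val / 2 = u := by simp [hv]; omega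
    have hFx : F x = g := by
      have h1 : vt x = vt y + (p + 1) * c + psum (y.drop p) := by
        rw [hx, vt_insert v y p hp, hvmod]
      have h2 : usum x = usum y + u := by rw [hx, usum_insert, hvdiv]
      have h1' : vt x = vt y + δ := by omega
      have e1 : (vt x : ZMod (n + 1)) = a := by
        rw [h1']
        push_cast
        rw [hδdef, ZMod.natCast_val, ZMod.cast_id]
        ring
      have e2 : (usum x : ZMod m) = s := by
        rw [h2]
        push_cast
        rw [hu, ZMod.natCast_val, ZMod.cast_id]
        ring
      have : F x = (a, s) := by
        simp only [F, e1, e2]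
      rw [this]
    refine ⟨x, Finset.mem_image.2 ⟨⟨x, hxlen⟩, Finset.mem_filter.2 ⟨hmemb _, hFx⟩, rfl⟩, ?_⟩
    -- sublist
    conv_lhs => rw [← takedrop y p]
    exact List.Sublist.append (List.Sublist.refl _) (List.sublist_cons_self v (y.drop p))
  · -- cardinality bound
    set C0 : Finset (List.Vector (Fin q) n) := big.filter (fun v => F v.val = g) with hC0
    have hcardC : (C0.image Subtype.val).card = C0.card :=
      Finset.card_image_of_injective _ Subtype.val_injective
    have hsum : ∑ g' ∈ (Finset.univ : Finset G),
        (big.filter (fun v => F v.val = g')).card = big.card :=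
      (Finset.card_eq_sum_card_fiberwise (fun x _ => Finset.mem_univ (F x.val))).symm
    have hbound : (Finset.univ : Finset G).card * C0.card ≤ q ^ n := by
      calc (Finset.univ : Finset G).card * C0.card
          = ∑ _g' ∈ (Finset.univ : Finset G), C0.card := by
            rw [Finset.sum_const, smul_eq_mul]
        _ ≤ ∑ g' ∈ (Finset.univ : Finset G),
              (big.filter (fun v => F v.val = g')).card :=
            Finset.sum_le_sum (fun g' hg' => hgmin g' hg')
        _ = q ^ n := by rw [hsum, hbigcard]
    have hGcard : (Finset.univ : Finset G).card = (n + 1) * m := by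
      simp [hG, Finset.card_univ, ZMod.card]
    rw [hGcard] at hbound
    rw [hcardC]
    have hKpos : (0:ℝ) < ((n : ℝ) + 1) * (m : ℝ) := by positivity
    rw [le_div_iff₀ hKpos]
    have : ((((n + 1) * m) * C0.card : ℕ) : ℝ) ≤ ((q ^ n : ℕ) : ℝ) := by exact_mod_cast hbound
    push_cast at this ⊢
    nlinarith [this]
end

section
/- Let q ≥ 2 and let S ⊆ Σ_q^{n1} and T ⊆ Σ_q^{n1+1} be such that every y ∈ Σ_q^{n1+1} \ T has some s ∈ S as a subsequence, and let C ⊆ Σ_q^{n2} be a single-insertion-covering code. Then the code {s·y : s ∈ S, y ∈ Σ_q^{n2+1}} ∪ {t·c : t ∈ T, c ∈ C} ⊆ Σ_q^{n1+n2+1} (where · is concatenation) is a single-insertion-covering code of length n1+n2+1, of size at most |S|·q^{n2+1} + |T|·|C|. -/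
/-! Split a word `y` of length `n1 + n2 + 2` as `y₁ ++ y₂` with `|y₁| = n1 + 1`. If `y₁ ∉ T`, some
`s ∈ S` is a subsequence of `y₁`, so `s ++ y₂` is a codeword below `y`; if `y₁ ∈ T`, some `c ∈ C` is a
subsequence of `y₂`, so `y₁ ++ c` is. The size bound is the union bound on the two product codes. -/

/-- The finset of all words of length `n` over the alphabet `Fin q`. -/
def allWords (q n : ℕ) : Finset (List (Fin q)) :=
  (Finset.univ : Finset (Fin n → Fin q)).image List.ofFn

open Finset

lemma mem_allWords {q n : ℕ} {l : List (Fin q)} : l ∈ allWords q n ↔ l.length = n := by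
  simp only [allWords, mem_image, mem_univ, true_and]
  constructor
  · rintro ⟨f, rfl⟩
    exact List.length_ofFn
  · rintro rfl
    exact ⟨l.get, List.ofFn_get l⟩

lemma card_allWords (q n : ℕ) : #(allWords q n) = q ^ n := by
  rw [allWords, card_image_of_injective _ List.ofFn_injective, card_univ, Fintype.card_fun,
    Fintype.card_fin, Fintype.card_fin]

section Concatenation

variable {α : Type*} [DecidableEq α]

lemma length_of_mem_image₂_append {A B : Finset (List α)} {m n : ℕ}
    (hA : ∀ a ∈ A, a.length = m) (hB : ∀ b ∈ B, b.length = n) {d : List α}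
    (hd : d ∈ image₂ (· ++ ·) A B) : d.length = m + n := by
  obtain ⟨a, ha, b, hb, rfl⟩ := mem_image₂.1 hd
  rw [List.length_append, hA a ha, hB b hb]

lemma exists_mem_semidirect_sublist {S T C B : Finset (List α)} {n1 n2 : ℕ}
    (hST : ∀ y : List α, y.length = n1 + 1 → y ∉ T → ∃ s ∈ S, s.Sublist y)
    (hCcov : ∀ y : List α, y.length = n2 + 1 → ∃ c ∈ C, c.Sublist y)
    (hB : ∀ y : List α, y.length = n2 + 1 → y ∈ B)
    {y : List α} (hy : y.length = n1 + n2 + 2) :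
    ∃ d ∈ image₂ (· ++ ·) S B ∪ image₂ (· ++ ·) T C, d.Sublist y := by
  set y₁ := y.take (n1 + 1)
  set y₂ := y.drop (n1 + 1)
  have hy₁ : y₁.length = n1 + 1 := by rw [List.length_take, hy]; omega
  have hy₂ : y₂.length = n2 + 1 := by rw [List.length_drop, hy]; omega
  rw [← List.take_append_drop (n1 + 1) y]
  by_cases hT : y₁ ∈ T
  · obtain ⟨c, hc, hcy⟩ := hCcov y₂ hy₂
    exact ⟨y₁ ++ c, mem_union_right _ (mem_image₂_of_mem hT hc), (List.Sublist.refl y₁).append hcy⟩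
  · obtain ⟨s, hs, hsy⟩ := hST y₁ hy₁ hT
    exact ⟨s ++ y₂, mem_union_left _ (mem_image₂_of_mem hs (hB y₂ hy₂)),
      hsy.append (List.Sublist.refl y₂)⟩

lemma card_union_image₂_append_le (S B T C : Finset (List α)) :
    #(image₂ (· ++ ·) S B ∪ image₂ (· ++ ·) T C) ≤ #S * #B + #T * #C :=
  (card_union_le _ _).trans (Nat.add_le_add (card_image₂_le _ _ _) (card_image₂_le _ _ _))

end Concatenation

theorem semidirect_sum_single_insertion_general (q n1 n2 : ℕ)
    (S T C : Finset (List (Fin q)))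
    (hS : ∀ s ∈ S, s.length = n1)
    (hT : ∀ t ∈ T, t.length = n1 + 1)
    (hST : ∀ y : List (Fin q), y.length = n1 + 1 → y ∉ T → ∃ s ∈ S, s.Sublist y)
    (hC : ∀ c ∈ C, c.length = n2)
    (hCcov : ∀ y : List (Fin q), y.length = n2 + 1 → ∃ c ∈ C, c.Sublist y) :
    (∀ d ∈ (S ×ˢ allWords q (n2 + 1)).image (fun p => p.1 ++ p.2) ∪
            (T ×ˢ C).image (fun p => p.1 ++ p.2),
        d.length = n1 + n2 + 1) ∧
    (∀ y : List (Fin q), y.length = n1 + n2 + 2 →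
      ∃ d ∈ (S ×ˢ allWords q (n2 + 1)).image (fun p => p.1 ++ p.2) ∪
             (T ×ˢ C).image (fun p => p.1 ++ p.2),
        d.Sublist y) ∧
    ((S ×ˢ allWords q (n2 + 1)).image (fun p => p.1 ++ p.2) ∪
      (T ×ˢ C).image (fun p => p.1 ++ p.2)).card
      ≤ S.card * q ^ (n2 + 1) + T.card * C.card := by
  -- `image₂ f s t` is by definition `(s ×ˢ t).image (uncurry f)`, so the lemmas apply as stated.
  refine ⟨fun d hd => ?_, fun y hy => ?_, ?_⟩
  · rcases mem_union.1 hd with hd | hd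
    · rw [length_of_mem_image₂_append hS (fun _ => mem_allWords.1) hd]; omega
    · rw [length_of_mem_image₂_append hT hC hd]; omega
  · exact exists_mem_semidirect_sublist hST hCcov (fun _ => mem_allWords.2) hy
  · rw [← card_allWords q (n2 + 1)]
    exact card_union_image₂_append_le S (allWords q (n2 + 1)) T C

/-- Semi-direct sum of covering codes: if `S ⊆ Σ_q^{n1}` covers
`Σ_q^{n1+1} \ T` with a single insertion and `C ⊆ Σ_q^{n2}` is a
single-insertion-covering code, then
`(S ⊗ Σ_q^{n2+1}) ∪ (T ⊗ C)` is a single-insertion-covering code of length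
`n1+n2+1` of size at most `|S|·q^(n2+1) + |T|·|C|`. -/
theorem semidirect_sum_single_insertion (q n1 n2 : ℕ) (hq : 2 ≤ q)
    (S T C : Finset (List (Fin q)))
    (hS : ∀ s ∈ S, s.length = n1)
    (hT : ∀ t ∈ T, t.length = n1 + 1)
    (hST : ∀ y : List (Fin q), y.length = n1 + 1 → y ∉ T → ∃ s ∈ S, s.Sublist y)
    (hC : ∀ c ∈ C, c.length = n2)
    (hCcov : ∀ y : List (Fin q), y.length = n2 + 1 → ∃ c ∈ C, c.Sublist y) :
    (∀ d ∈ (S ×ˢ allWords q (n2 + 1)).image (fun p => p.1 ++ p.2) ∪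
            (T ×ˢ C).image (fun p => p.1 ++ p.2),
        d.length = n1 + n2 + 1) ∧
    (∀ y : List (Fin q), y.length = n1 + n2 + 2 →
      ∃ d ∈ (S ×ˢ allWords q (n2 + 1)).image (fun p => p.1 ++ p.2) ∪
             (T ×ˢ C).image (fun p => p.1 ++ p.2),
        d.Sublist y) ∧
    ((S ×ˢ allWords q (n2 + 1)).image (fun p => p.1 ++ p.2) ∪
      (T ×ˢ C).image (fun p => p.1 ++ p.2)).card
      ≤ S.card * q ^ (n2 + 1) + T.card * C.card :=
  semidirect_sum_single_insertion_general q n1 n2 S T C hS hT hST hC hCcov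
end

section
/- Let R1, R2 ≥ 0 be integers, R = R1 + R2, and let n1 ≥ R1 and n2 ≥ 0 be integers. Let S ⊆ {0,1}^{n1−R1} and T ⊆ {0,1}^{n1} be such that every y ∈ {0,1}^{n1} \ T has some s ∈ S as a subsequence. Let C1 ⊆ {0,1}^{n2+R1} be an R2-insertion-covering code and C2 ⊆ {0,1}^{n2} an R-insertion-covering code. Then {s·c1 : s ∈ S, c1 ∈ C1} ∪ {t·c2 : t ∈ T, c2 ∈ C2} ⊆ {0,1}^{n1+n2} is an R-insertion-covering code of length n1+n2 (every y ∈ {0,1}^{n1+n2+R} has a codeword as a subsequence), of size at most |S|·|C1| + |T|·|C2|. -/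
/-- Semi-direct sum for multiple insertions: if `S ⊆ {0,1}^(n1-R1)` covers
`{0,1}^(n1) \ T` with `R1` insertions, `C1 ⊆ {0,1}^(n2+R1)` is an
`R2`-insertion-covering code and `C2 ⊆ {0,1}^(n2)` is an
`(R1+R2)`-insertion-covering code, then `(S ⊗ C1) ∪ (T ⊗ C2)` is an
`(R1+R2)`-insertion-covering code of length `n1+n2` of size at most
`|S|·|C1| + |T|·|C2|`. -/
theorem semidirect_sum_multiple_insertions (R1 R2 n1 n2 : ℕ) (hn1 : R1 ≤ n1)
    (S T C1 C2 : Finset (List (Fin 2)))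
    (hS : ∀ s ∈ S, s.length = n1 - R1)
    (hT : ∀ t ∈ T, t.length = n1)
    (hST : ∀ y : List (Fin 2), y.length = n1 → y ∉ T → ∃ s ∈ S, s.Sublist y)
    (hC1len : ∀ c ∈ C1, c.length = n2 + R1)
    (hC1cov : ∀ y : List (Fin 2), y.length = n2 + R1 + R2 → ∃ c ∈ C1, c.Sublist y)
    (hC2len : ∀ c ∈ C2, c.length = n2)
    (hC2cov : ∀ y : List (Fin 2), y.length = n2 + (R1 + R2) → ∃ c ∈ C2, c.Sublist y) :
    (∀ d ∈ (S ×ˢ C1).image (fun p => p.1 ++ p.2) ∪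
            (T ×ˢ C2).image (fun p => p.1 ++ p.2),
        d.length = n1 + n2) ∧
    (∀ y : List (Fin 2), y.length = n1 + n2 + (R1 + R2) →
      ∃ d ∈ (S ×ˢ C1).image (fun p => p.1 ++ p.2) ∪
             (T ×ˢ C2).image (fun p => p.1 ++ p.2),
        d.Sublist y) ∧
    ((S ×ˢ C1).image (fun p => p.1 ++ p.2) ∪
      (T ×ˢ C2).image (fun p => p.1 ++ p.2)).card
      ≤ S.card * C1.card + T.card * C2.card := by
  refine ⟨?_, ?_, ?_⟩
  · intro d hd
    simp only [Finset.mem_union, Finset.mem_image, Finset.mem_product] at hd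
    rcases hd with ⟨⟨a, b⟩, ⟨ha, hb⟩, rfl⟩ | ⟨⟨a, b⟩, ⟨ha, hb⟩, rfl⟩
    · have := hS a ha; have := hC1len b hb
      simp only [List.length_append]; omega
    · have := hT a ha; have := hC2len b hb
      simp only [List.length_append]; omega
  · intro y hy
    have h1 : (y.take n1).length = n1 := by simp; omega
    have h2 : (y.drop n1).length = n2 + R1 + R2 := by simp; omega
    by_cases hyT : y.take n1 ∈ T
    · obtain ⟨c, hc, hcs⟩ := hC2cov (y.drop n1) (by omega)
      refine ⟨y.take n1 ++ c, Finset.mem_union_right _ ?_, ?_⟩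
      · exact Finset.mem_image.2 ⟨(y.take n1, c), Finset.mem_product.2 ⟨hyT, hc⟩, rfl⟩
      · have := (List.Sublist.refl (y.take n1)).append hcs
        simpa [List.take_append_drop] using this
    · obtain ⟨s, hs, hss⟩ := hST (y.take n1) h1 hyT
      obtain ⟨c, hc, hcs⟩ := hC1cov (y.drop n1) h2
      refine ⟨s ++ c, Finset.mem_union_left _ ?_, ?_⟩
      · exact Finset.mem_image.2 ⟨(s, c), Finset.mem_product.2 ⟨hs, hc⟩, rfl⟩
      · have := hss.append hcs
        simpa [List.take_append_drop] using this
  · calc ((S ×ˢ C1).image (fun p => p.1 ++ p.2) ∪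
        (T ×ˢ C2).image (fun p => p.1 ++ p.2)).card
        ≤ ((S ×ˢ C1).image (fun p => p.1 ++ p.2)).card +
          ((T ×ˢ C2).image (fun p => p.1 ++ p.2)).card := Finset.card_union_le _ _
      _ ≤ (S ×ˢ C1).card + (T ×ˢ C2).card :=
          Nat.add_le_add (Finset.card_image_le) (Finset.card_image_le)
      _ = S.card * C1.card + T.card * C2.card := by
          rw [Finset.card_product, Finset.card_product]
end

section
/- Let R1, R2 ≥ 0 be integers, R = R1 + R2, and let n1 ≥ 0 and n2 ≥ R be integers. Let S ⊆ {0,1}^{n1+R1} and T ⊆ {0,1}^{n1} be such that every y ∈ {0,1}^{n1} \ T is a subsequence of some s ∈ S. Let C1 ⊆ {0,1}^{n2−R1} be an R2-deletion-covering code and C2 ⊆ {0,1}^{n2} an R-deletion-covering code. Then {s·c1 : s ∈ S, c1 ∈ C1} ∪ {t·c2 : t ∈ T, c2 ∈ C2} ⊆ {0,1}^{n1+n2} is an R-deletion-covering code of length n1+n2 (every y ∈ {0,1}^{n1+n2−R} is a subsequence of some codeword), of size at most |S|·|C1| + |T|·|C2|. -/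
/-- Semi-direct sum for multiple deletions: if `S ⊆ {0,1}^(n1+R1)` covers
`{0,1}^(n1) \ T` with `R1` deletions, `C1 ⊆ {0,1}^(n2-R1)` is an
`R2`-deletion-covering code and `C2 ⊆ {0,1}^(n2)` is an
`(R1+R2)`-deletion-covering code, then `(S ⊗ C1) ∪ (T ⊗ C2)` is an
`(R1+R2)`-deletion-covering code of length `n1+n2` of size at most
`|S|·|C1| + |T|·|C2|`. -/
theorem semidirect_sum_multiple_deletions (R1 R2 n1 n2 : ℕ) (hn2 : R1 + R2 ≤ n2)
    (S T C1 C2 : Finset (List (Fin 2)))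
    (hS : ∀ s ∈ S, s.length = n1 + R1)
    (hT : ∀ t ∈ T, t.length = n1)
    (hST : ∀ y : List (Fin 2), y.length = n1 → y ∉ T → ∃ s ∈ S, y.Sublist s)
    (hC1len : ∀ c ∈ C1, c.length = n2 - R1)
    (hC1cov : ∀ y : List (Fin 2), y.length = n2 - R1 - R2 → ∃ c ∈ C1, y.Sublist c)
    (hC2len : ∀ c ∈ C2, c.length = n2)
    (hC2cov : ∀ y : List (Fin 2), y.length = n2 - (R1 + R2) → ∃ c ∈ C2, y.Sublist c) :
    (∀ d ∈ (S ×ˢ C1).image (fun p => p.1 ++ p.2) ∪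
            (T ×ˢ C2).image (fun p => p.1 ++ p.2),
        d.length = n1 + n2) ∧
    (∀ y : List (Fin 2), y.length = n1 + n2 - (R1 + R2) →
      ∃ d ∈ (S ×ˢ C1).image (fun p => p.1 ++ p.2) ∪
             (T ×ˢ C2).image (fun p => p.1 ++ p.2),
        y.Sublist d) ∧
    ((S ×ˢ C1).image (fun p => p.1 ++ p.2) ∪
      (T ×ˢ C2).image (fun p => p.1 ++ p.2)).card
      ≤ S.card * C1.card + T.card * C2.card := by
  have hR1 : R1 ≤ n2 := le_trans (Nat.le_add_right _ _) hn2
  refine ⟨?_, ?_, ?_⟩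
  · intro d hd
    rcases Finset.mem_union.mp hd with h | h
    · obtain ⟨⟨s, c⟩, hp, rfl⟩ := Finset.mem_image.mp h
      rw [Finset.mem_product] at hp
      simp [List.length_append, hS s hp.1, hC1len c hp.2]
      omega
    · obtain ⟨⟨t, c⟩, hp, rfl⟩ := Finset.mem_image.mp h
      rw [Finset.mem_product] at hp
      simp [List.length_append, hT t hp.1, hC2len c hp.2]
  · intro y hy
    have hylen : y.length = n1 + (n2 - (R1 + R2)) := by omega
    have h1 : (y.take n1).length = n1 := by
      rw [List.length_take]; omega
    have h2 : (y.drop n1).length = n2 - (R1 + R2) := by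
      rw [List.length_drop]; omega
    by_cases hmem : y.take n1 ∈ T
    · obtain ⟨c, hc, hsub⟩ := hC2cov (y.drop n1) h2
      refine ⟨y.take n1 ++ c, ?_, ?_⟩
      · exact Finset.mem_union_right _ (Finset.mem_image.mpr
          ⟨(y.take n1, c), Finset.mem_product.mpr ⟨hmem, hc⟩, rfl⟩)
      · have h := List.Sublist.append_left hsub (y.take n1)
        rwa [List.take_append_drop] at h
    · obtain ⟨s, hs, hsub1⟩ := hST (y.take n1) h1 hmem
      obtain ⟨c, hc, hsub2⟩ := hC1cov (y.drop n1) (by omega)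
      refine ⟨s ++ c, ?_, ?_⟩
      · exact Finset.mem_union_left _ (Finset.mem_image.mpr
          ⟨(s, c), Finset.mem_product.mpr ⟨hs, hc⟩, rfl⟩)
      · have h := List.Sublist.append hsub1 hsub2
        rwa [List.take_append_drop] at h
  · refine le_trans (Finset.card_union_le _ _) ?_
    rw [← Finset.card_product S C1, ← Finset.card_product T C2]
    exact Nat.add_le_add Finset.card_image_le Finset.card_image_le
end
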